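/- arXiv:2410.12767 — 5 statements merged into one kernel-verified Lean document; each statement's English description precedes it below -/
import Mathlib

section
/- Let Ω ⊆ ℝᵈ be an open connected set, and let ν₁, ω₁, ν₂, ω₂ : Ω → ℝ be C¹ functions such that ν₁² + ω₁² = ν₂² + ω₂² = 1 on Ω and ν₁∇ω₁ − ω₁∇ν₁ = ν₂∇ω₂ − ω₂∇ν₂ on Ω. Then there exists a constant φ ∈ ℝ such that ν₁(x) + iω₁(x) = (ν₂(x) + iω₂(x)) e^{iφ} for all x ∈ Ω. -/
noncomputable section

open Set

/-- Partial derivative (in direction `i`) of a real-valued function on `ℝᵈ`. -/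
def pdR (d : ℕ) (f : EuclideanSpace ℝ (Fin d) → ℝ) (i : Fin d)
    (x : EuclideanSpace ℝ (Fin d)) : ℝ :=
  fderiv ℝ f x (EuclideanSpace.single i 1)

/-- Laplacian of a real-valued function on `ℝᵈ`. -/
def lapR (d : ℕ) (f : EuclideanSpace ℝ (Fin d) → ℝ)
    (x : EuclideanSpace ℝ (Fin d)) : ℝ :=
  ∑ i, pdR d (pdR d f i) i x

/-- Partial derivative (in direction `i`) of a complex-valued function on `ℝᵈ`. -/
def pdC (d : ℕ) (f : EuclideanSpace ℝ (Fin d) → ℂ) (i : Fin d)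
    (x : EuclideanSpace ℝ (Fin d)) : ℂ :=
  fderiv ℝ f x (EuclideanSpace.single i 1)

/-- Laplacian of a complex-valued function on `ℝᵈ`. -/
def lapC (d : ℕ) (f : EuclideanSpace ℝ (Fin d) → ℂ)
    (x : EuclideanSpace ℝ (Fin d)) : ℂ :=
  ∑ i, pdC d (pdC d f i) i x

/-!
Write `u₁ = ν₁ + ω₁ i` and `u₂ = ν₂ + ω₂ i`. Since `|u| = 1`, differentiating `|u|² = 1` shows that
`conj u ∇u` is purely imaginary, so `∇u = i u (ν ∇ω - ω ∇ν)`. Equal phase gradients then make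
`∇(u₁ conj u₂)` vanish, so `u₁ conj u₂` is a unimodular constant `exp (φ i)` on the connected
open set, and `u₁ = u₂ exp (φ i)`.
-/

open Complex ComplexConjugate Filter Topology

section UnitModulus

variable {E : Type*} [NormedAddCommGroup E] [NormedSpace ℝ E]

/-- For `u = exp (θ * I)` this is the derivative of the phase `θ`; for `u = ν + ω * I` it is the
paper's `ν ∇ω - ω ∇ν`. -/
def phaseDeriv (u : E → ℂ) (x : E) : E →L[ℝ] ℝ :=
  imCLM.comp (conj (u x) • fderiv ℝ u x)

lemma phaseDeriv_apply (u : E → ℂ) (x v : E) :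
    phaseDeriv u x v = (conj (u x) * fderiv ℝ u x v).im := rfl

lemma re_conj_mul_fderiv_eq_zero {u : E → ℂ} {x : E} (hu : DifferentiableAt ℝ u x)
    (h : ∀ᶠ y in 𝓝 x, ‖u y‖ = 1) (v : E) : (conj (u x) * fderiv ℝ u x v).re = 0 := by
  have hconst : (‖u ·‖ ^ 2) =ᶠ[𝓝 x] fun _ => (1 : ℝ) := h.mono fun y hy => by simp [hy]
  have h0 : fderiv ℝ (‖u ·‖ ^ 2) x = 0 := hconst.fderiv_eq.trans (fderiv_const_apply _)
  have h0v := congrArg (· v) (hu.hasFDerivAt.norm_sq.fderiv.symm.trans h0)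
  simp only [smul_apply, ContinuousLinearMap.comp_apply, coe_innerSL_apply, Complex.inner,
    nsmul_eq_mul, Nat.cast_ofNat, zero_apply] at h0v
  rw [mul_comm]
  linarith

lemma fderiv_eq_mul_phaseDeriv {u : E → ℂ} {x : E} (hu : DifferentiableAt ℝ u x)
    (h : ∀ᶠ y in 𝓝 x, ‖u y‖ = 1) (v : E) :
    fderiv ℝ u x v = u x * (phaseDeriv u x v * I) := by
  have hre := re_conj_mul_fderiv_eq_zero hu h v
  have hpure : conj (u x) * fderiv ℝ u x v = phaseDeriv u x v * I :=
    Complex.ext (by simpa using hre) (by simp [phaseDeriv_apply])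
  have hunit : u x * conj (u x) = 1 := by
    rw [mul_conj, normSq_eq_norm_sq, h.self_of_nhds]; simp
  rw [← hpure, ← mul_assoc, hunit, one_mul]

lemma fderiv_mul_conj_eq_zero {u₁ u₂ : E → ℂ} {x : E}
    (hu₁ : DifferentiableAt ℝ u₁ x) (hu₂ : DifferentiableAt ℝ u₂ x)
    (hn₁ : ∀ᶠ y in 𝓝 x, ‖u₁ y‖ = 1) (hn₂ : ∀ᶠ y in 𝓝 x, ‖u₂ y‖ = 1)
    (hphase : phaseDeriv u₁ x = phaseDeriv u₂ x) :
    fderiv ℝ (fun y => u₁ y * conj (u₂ y)) x = 0 := by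
  refine (hu₁.hasFDerivAt.fun_mul hu₂.hasFDerivAt.star).fderiv.trans ?_
  ext v
  simp only [add_apply, smul_apply, ContinuousLinearMap.comp_apply, ContinuousLinearEquiv.coe_coe,
    starL'_apply, smul_eq_mul, zero_apply, fderiv_eq_mul_phaseDeriv hu₁ hn₁,
    fderiv_eq_mul_phaseDeriv hu₂ hn₂, hphase, RCLike.star_def, map_mul, conj_ofReal, conj_I]
  ring

lemma exists_eq_mul_exp_of_phaseDeriv_eq {Ω : Set E} (hΩ : IsOpen Ω) (hΩc : IsPreconnected Ω)
    {u₁ u₂ : E → ℂ} (hu₁ : DifferentiableOn ℝ u₁ Ω) (hu₂ : DifferentiableOn ℝ u₂ Ω)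
    (hn₁ : ∀ x ∈ Ω, ‖u₁ x‖ = 1) (hn₂ : ∀ x ∈ Ω, ‖u₂ x‖ = 1)
    (hphase : ∀ x ∈ Ω, phaseDeriv u₁ x = phaseDeriv u₂ x) :
    ∃ φ : ℝ, ∀ x ∈ Ω, u₁ x = u₂ x * exp (φ * I) := by
  have hnhds {u : E → ℂ} (hn : ∀ x ∈ Ω, ‖u x‖ = 1) {x} (hx : x ∈ Ω) : ∀ᶠ y in 𝓝 x, ‖u y‖ = 1 :=
    eventually_of_mem (hΩ.mem_nhds hx) hn
  obtain ⟨c, hc⟩ := hΩ.exists_is_const_of_fderiv_eq_zero hΩc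
    (f := fun y => u₁ y * conj (u₂ y)) (hu₁.fun_mul hu₂.star) fun x hx => fderiv_mul_conj_eq_zero
      (hu₁.differentiableAt (hΩ.mem_nhds hx)) (hu₂.differentiableAt (hΩ.mem_nhds hx))
      (hnhds hn₁ hx) (hnhds hn₂ hx) (hphase x hx)
  refine ⟨c.arg, fun x hx => ?_⟩
  have hunit : conj (u₂ x) * u₂ x = 1 := by
    rw [conj_mul', hn₂ x hx]; simp
  have hu₁x : u₁ x = c * u₂ x := by
    rw [← hc x hx, mul_assoc, hunit, mul_one]
  have hc1 : ‖c‖ = 1 := by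
    simpa [hn₁ x hx, hn₂ x hx] using (congrArg norm hu₁x).symm
  rw [hu₁x, mul_comm, ← one_mul (exp _), ← ofReal_one, ← hc1, norm_mul_exp_arg_mul_I]

lemma HasFDerivAt.ofReal_add_mul_I {ν ω : E → ℝ} {ν' ω' : E →L[ℝ] ℝ} {x : E}
    (hν : HasFDerivAt ν ν' x) (hω : HasFDerivAt ω ω' x) :
    HasFDerivAt (fun y => (ν y : ℂ) + ω y * I) (ofRealCLM.comp ν' + I • ofRealCLM.comp ω') x :=
  (ofRealCLM.hasFDerivAt.comp x hν).add ((ofRealCLM.hasFDerivAt.comp x hω).mul_const I)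

lemma phaseDeriv_ofReal_add_mul_I {ν ω : E → ℝ} {x : E}
    (hν : DifferentiableAt ℝ ν x) (hω : DifferentiableAt ℝ ω x) (v : E) :
    phaseDeriv (fun y => (ν y : ℂ) + ω y * I) x v
      = ν x * fderiv ℝ ω x v - ω x * fderiv ℝ ν x v := by
  rw [phaseDeriv_apply, (hν.hasFDerivAt.ofReal_add_mul_I hω.hasFDerivAt).fderiv]
  simp only [add_apply, smul_apply, ContinuousLinearMap.comp_apply, ofRealCLM_apply, smul_eq_mul,
    map_add, map_mul, conj_ofReal, conj_I, mul_im, mul_re, add_re, add_im, neg_re, neg_im,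
    ofReal_re, ofReal_im, I_re, I_im]
  ring

end UnitModulus

lemma EuclideanSpace.continuousLinearMap_ext_single {ι 𝕜 F : Type*} [Fintype ι] [DecidableEq ι]
    [RCLike 𝕜] [AddCommGroup F] [Module 𝕜 F] [TopologicalSpace F]
    {f g : EuclideanSpace 𝕜 ι →L[𝕜] F} (h : ∀ i, f (single i 1) = g (single i 1)) : f = g :=
  ContinuousLinearMap.coe_injective <|
    (EuclideanSpace.basisFun ι 𝕜).toBasis.ext fun i => by simpa using h i

theorem phase_shift_from_equal_phase_gradient
    (d : ℕ) (Ω : Set (EuclideanSpace ℝ (Fin d))) (hΩ : IsOpen Ω) (hΩc : IsConnected Ω)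
    (ν₁ ω₁ ν₂ ω₂ : EuclideanSpace ℝ (Fin d) → ℝ)
    (hν₁ : ContDiffOn ℝ 1 ν₁ Ω) (hω₁ : ContDiffOn ℝ 1 ω₁ Ω)
    (hν₂ : ContDiffOn ℝ 1 ν₂ Ω) (hω₂ : ContDiffOn ℝ 1 ω₂ Ω)
    (hn₁ : ∀ x ∈ Ω, (ν₁ x) ^ 2 + (ω₁ x) ^ 2 = 1)
    (hn₂ : ∀ x ∈ Ω, (ν₂ x) ^ 2 + (ω₂ x) ^ 2 = 1)
    (hgrad : ∀ x ∈ Ω, ∀ i : Fin d,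
      ν₁ x * pdR d ω₁ i x - ω₁ x * pdR d ν₁ i x
        = ν₂ x * pdR d ω₂ i x - ω₂ x * pdR d ν₂ i x) :
    ∃ φ : ℝ, ∀ x ∈ Ω,
      (ν₁ x : ℂ) + Complex.I * (ω₁ x : ℂ)
        = ((ν₂ x : ℂ) + Complex.I * (ω₂ x : ℂ)) * Complex.exp (Complex.I * (φ : ℂ)) := by
  have hdiff {f : EuclideanSpace ℝ (Fin d) → ℝ} (hf : ContDiffOn ℝ 1 f Ω) {x} (hx : x ∈ Ω) :
      DifferentiableAt ℝ f x :=
    (hf.differentiableOn one_ne_zero).differentiableAt (hΩ.mem_nhds hx)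
  have hdiffOn {ν ω : EuclideanSpace ℝ (Fin d) → ℝ} (hν : ContDiffOn ℝ 1 ν Ω)
      (hω : ContDiffOn ℝ 1 ω Ω) : DifferentiableOn ℝ (fun y => (ν y : ℂ) + ω y * I) Ω :=
    fun x hx => ((hdiff hν hx).hasFDerivAt.ofReal_add_mul_I
      (hdiff hω hx).hasFDerivAt).differentiableAt.differentiableWithinAt
  have hnorm {ν ω : EuclideanSpace ℝ (Fin d) → ℝ} (hn : ∀ x ∈ Ω, ν x ^ 2 + ω x ^ 2 = 1) :
      ∀ x ∈ Ω, ‖(ν x : ℂ) + ω x * I‖ = 1 := fun x hx => by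
    rw [norm_add_mul_I, hn x hx, Real.sqrt_one]
  have hphase : ∀ x ∈ Ω, phaseDeriv (fun y => (ν₁ y : ℂ) + ω₁ y * I) x
      = phaseDeriv (fun y => (ν₂ y : ℂ) + ω₂ y * I) x := fun x hx =>
    EuclideanSpace.continuousLinearMap_ext_single fun i => by
      rw [phaseDeriv_ofReal_add_mul_I (hdiff hν₁ hx) (hdiff hω₁ hx),
        phaseDeriv_ofReal_add_mul_I (hdiff hν₂ hx) (hdiff hω₂ hx)]
      exact hgrad x hx i
  obtain ⟨φ, hφ⟩ := exists_eq_mul_exp_of_phaseDeriv_eq hΩ hΩc.isPreconnected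
    (hdiffOn hν₁ hω₁) (hdiffOn hν₂ hω₂) (hnorm hn₁) (hnorm hn₂) hphase
  exact ⟨φ, fun x hx => by simpa only [mul_comm I] using hφ x hx⟩
end
end

section
/- Let Ω ⊆ ℝᵈ be an open set, let κ, β : Ω → ℝ, let ε > 0, and suppose u : [0,ε) × Ω → ℂ is a C² solution of the Gross–Pitaevskii equation i ∂_z u + κ Δu + β|u|²u = 0 on (0,ε) × Ω. Suppose u is decomposed as u = ρ(v + iw), where ρ : [0,ε) × Ω → (0,∞) and v, w : [0,ε) × Ω → ℝ are C² and satisfy v² + w² = 1 (so that ρ = |u|). Then on (0,ε) × Ω one has ∂_z ρ = κ A(ρ,v,w), ∂_z v = κ B(ρ,v,w) − β ρ² w, and ∂_z w = κ C(ρ,v,w) + β ρ² v. -/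
/-! Write `u = ρ φ` with `φ = v + i w` and `|φ| = 1`. Differentiating `|φ|² = 1` gives
`v ∂v + w ∂w = 0` for every derivative `∂`, so `∂φ = i φ (v ∂w - w ∂v)`; in particular
`∇ρ·∇φ = -i φ ∇ρ·(w∇v - v∇w)`. Substituting `u = ρ φ` into the equation and multiplying by
`φ̄`, the imaginary part is `∂_z ρ = κ A`, and the real part gives the phase rate
`v ∂_z w - w ∂_z v = κ (Δρ/ρ + vΔv + wΔw) + β ρ²`, which together with `v ∂_z v + w ∂_z w = 0`
determines `∂_z v` and `∂_z w`. -/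

noncomputable section

open Set

/-- `A(ρ,v,w) := ρ(wΔv − vΔw) + 2∇ρ·(w∇v − v∇w)`. -/
def Afun (d : ℕ) (ρ v w : EuclideanSpace ℝ (Fin d) → ℝ)
    (x : EuclideanSpace ℝ (Fin d)) : ℝ :=
  ρ x * (w x * lapR d v x - v x * lapR d w x)
    + 2 * ∑ i, pdR d ρ i x * (w x * pdR d v i x - v x * pdR d w i x)

/-- `B(ρ,v,w) := −w[Δρ/ρ + wΔw + vΔv]`. -/
def Bfun (d : ℕ) (ρ v w : EuclideanSpace ℝ (Fin d) → ℝ)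
    (x : EuclideanSpace ℝ (Fin d)) : ℝ :=
  -(w x) * (lapR d ρ x / ρ x + (w x * lapR d w x + v x * lapR d v x))

/-- `C(ρ,v,w) := v[Δρ/ρ + wΔw + vΔv]`. -/
def Cfun (d : ℕ) (ρ v w : EuclideanSpace ℝ (Fin d) → ℝ)
    (x : EuclideanSpace ℝ (Fin d)) : ℝ :=
  v x * (lapR d ρ x / ρ x + (w x * lapR d w x + v x * lapR d v x))

open Filter Topology

section PartialDerivatives

variable {d : ℕ} {x : EuclideanSpace ℝ (Fin d)}

lemma Filter.EventuallyEq.pdR {f g : EuclideanSpace ℝ (Fin d) → ℝ} (h : f =ᶠ[𝓝 x] g) (i : Fin d) :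
    pdR d f i =ᶠ[𝓝 x] pdR d g i :=
  (h.fderiv (𝕜 := ℝ)).mono fun _ hy => DFunLike.congr_fun hy _

lemma Filter.EventuallyEq.pdC {f g : EuclideanSpace ℝ (Fin d) → ℂ} (h : f =ᶠ[𝓝 x] g) (i : Fin d) :
    pdC d f i =ᶠ[𝓝 x] pdC d g i :=
  (h.fderiv (𝕜 := ℝ)).mono fun _ hy => DFunLike.congr_fun hy _

lemma Filter.EventuallyEq.lapC_eq {f g : EuclideanSpace ℝ (Fin d) → ℂ} (h : f =ᶠ[𝓝 x] g) :
    lapC d f x = lapC d g x :=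
  Finset.sum_congr rfl fun i _ => ((h.pdC i).pdC i).eq_of_nhds

lemma ContDiffAt.pdR {f : EuclideanSpace ℝ (Fin d) → ℝ} (hf : ContDiffAt ℝ 2 f x) (i : Fin d) :
    ContDiffAt ℝ 1 (pdR d f i) x :=
  (ContinuousLinearMap.apply ℝ ℝ (EuclideanSpace.single i 1)).contDiff.contDiffAt.comp x
    (hf.fderiv_right (by norm_num))

lemma pdR_add {f g : EuclideanSpace ℝ (Fin d) → ℝ} (hf : DifferentiableAt ℝ f x)
    (hg : DifferentiableAt ℝ g x) (i : Fin d) :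
    pdR d (fun y => f y + g y) i x = pdR d f i x + pdR d g i x := by
  simp only [pdR, fderiv_fun_add hf hg, add_apply]

lemma pdR_mul {f g : EuclideanSpace ℝ (Fin d) → ℝ} (hf : DifferentiableAt ℝ f x)
    (hg : DifferentiableAt ℝ g x) (i : Fin d) :
    pdR d (fun y => f y * g y) i x = pdR d f i x * g x + f x * pdR d g i x := by
  simp only [pdR, fderiv_fun_mul hf hg, add_apply, smul_apply, smul_eq_mul]
  ring

lemma lapR_mul {f g : EuclideanSpace ℝ (Fin d) → ℝ} (hf : ContDiffAt ℝ 2 f x)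
    (hg : ContDiffAt ℝ 2 g x) :
    lapR d (fun y => f y * g y) x =
      lapR d f x * g x + 2 * ∑ i, pdR d f i x * pdR d g i x + f x * lapR d g x := by
  have hf1 := hf.differentiableAt (by norm_num)
  have hg1 := hg.differentiableAt (by norm_num)
  have hterm (i : Fin d) : pdR d (pdR d (fun y => f y * g y) i) i x
      = pdR d (pdR d f i) i x * g x + 2 * (pdR d f i x * pdR d g i x)
        + f x * pdR d (pdR d g i) i x := by
    have hprod : pdR d (fun y => f y * g y) i =ᶠ[𝓝 x]
        fun y => pdR d f i y * g y + f y * pdR d g i y :=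
      ((hf.eventually (by simp)).and (hg.eventually (by simp))).mono fun y ⟨hfy, hgy⟩ =>
        pdR_mul (hfy.differentiableAt (by norm_num)) (hgy.differentiableAt (by norm_num)) i
    have hdf := (hf.pdR i).differentiableAt one_ne_zero
    have hdg := (hg.pdR i).differentiableAt one_ne_zero
    rw [(hprod.pdR i).eq_of_nhds, pdR_add (hdf.fun_mul hg1) (hf1.fun_mul hdg),
      pdR_mul hdf hg1, pdR_mul hf1 hdg]
    ring
  simp only [lapR, hterm, Finset.sum_add_distrib, ← Finset.sum_mul, ← Finset.mul_sum]

lemma pdC_ofReal_add_I_mul {f g : EuclideanSpace ℝ (Fin d) → ℝ} (hf : DifferentiableAt ℝ f x)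
    (hg : DifferentiableAt ℝ g x) (i : Fin d) :
    pdC d (fun y => (f y : ℂ) + Complex.I * g y) i x
      = (pdR d f i x : ℂ) + Complex.I * pdR d g i x := by
  have hF : HasFDerivAt (fun y => (f y : ℂ) + Complex.I * g y)
      (Complex.ofRealCLM.comp (fderiv ℝ f x)
        + Complex.I • Complex.ofRealCLM.comp (fderiv ℝ g x)) x := by
    simpa [smul_eq_mul] using
      (Complex.ofRealCLM.hasFDerivAt.comp x hf.hasFDerivAt).fun_add
        ((Complex.ofRealCLM.hasFDerivAt.comp x hg.hasFDerivAt).fun_const_smul Complex.I)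
  simp [pdC, pdR, hF.fderiv]

lemma lapC_ofReal_add_I_mul {f g : EuclideanSpace ℝ (Fin d) → ℝ} (hf : ContDiffAt ℝ 2 f x)
    (hg : ContDiffAt ℝ 2 g x) :
    lapC d (fun y => (f y : ℂ) + Complex.I * g y) x
      = (lapR d f x : ℂ) + Complex.I * lapR d g x := by
  have hterm (i : Fin d) : pdC d (pdC d (fun y => (f y : ℂ) + Complex.I * g y) i) i x
      = (pdR d (pdR d f i) i x : ℂ) + Complex.I * pdR d (pdR d g i) i x := by
    have hsplit : pdC d (fun y => (f y : ℂ) + Complex.I * g y) i =ᶠ[𝓝 x]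
        fun y => (pdR d f i y : ℂ) + Complex.I * pdR d g i y :=
      ((hf.eventually (by simp)).and (hg.eventually (by simp))).mono fun y ⟨hfy, hgy⟩ =>
        pdC_ofReal_add_I_mul (hfy.differentiableAt (by norm_num))
          (hgy.differentiableAt (by norm_num)) i
    rw [(hsplit.pdC i).eq_of_nhds, pdC_ofReal_add_I_mul
      ((hf.pdR i).differentiableAt one_ne_zero) ((hg.pdR i).differentiableAt one_ne_zero)]
  simp only [lapC, lapR, hterm, Finset.sum_add_distrib, ← Finset.mul_sum, Complex.ofReal_sum]

end PartialDerivatives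

lemma mul_fderiv_add_mul_fderiv_eq_zero {E : Type*} [NormedAddCommGroup E] [NormedSpace ℝ E]
    {f g : E → ℝ} {x : E} (hf : DifferentiableAt ℝ f x) (hg : DifferentiableAt ℝ g x)
    (h : ∀ᶠ y in 𝓝 x, f y ^ 2 + g y ^ 2 = 1) (e : E) :
    f x * fderiv ℝ f x e + g x * fderiv ℝ g x e = 0 := by
  have hconst : fderiv ℝ (fun y => f y ^ 2 + g y ^ 2) x e = 0 := by
    have h' : (fun y => f y ^ 2 + g y ^ 2) =ᶠ[𝓝 x] fun _ => (1 : ℝ) := h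
    rw [h'.fderiv_eq]
    simp
  rw [fderiv_fun_add (hf.fun_pow 2) (hg.fun_pow 2), fderiv_fun_pow 2 hf, fderiv_fun_pow 2 hg]
    at hconst
  simp only [Nat.add_one_sub_one, pow_one, nsmul_eq_mul, Nat.cast_ofNat, add_apply, smul_apply,
    smul_eq_mul] at hconst
  linarith

lemma lapC_ofReal_mul_ofReal_add_I_mul {d : ℕ} {x : EuclideanSpace ℝ (Fin d)}
    {ρ v w : EuclideanSpace ℝ (Fin d) → ℝ} (hρ : ContDiffAt ℝ 2 ρ x) (hv : ContDiffAt ℝ 2 v x)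
    (hw : ContDiffAt ℝ 2 w x) (hunit : ∀ᶠ y in 𝓝 x, v y ^ 2 + w y ^ 2 = 1) :
    lapC d (fun y => (ρ y : ℂ) * (v y + Complex.I * w y)) x
      = ((lapR d ρ x * v x + 2 * w x * ∑ i, pdR d ρ i x * (w x * pdR d v i x - v x * pdR d w i x)
          + ρ x * lapR d v x : ℝ) : ℂ)
        + Complex.I * ((lapR d ρ x * w x
          - 2 * v x * ∑ i, pdR d ρ i x * (w x * pdR d v i x - v x * pdR d w i x)
          + ρ x * lapR d w x : ℝ) : ℂ) := by
  have hunit_x : v x ^ 2 + w x ^ 2 = 1 := hunit.self_of_nhds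
  have hgrad (i : Fin d) : v x * pdR d v i x + w x * pdR d w i x = 0 :=
    mul_fderiv_add_mul_fderiv_eq_zero (hv.differentiableAt (by norm_num))
      (hw.differentiableAt (by norm_num)) hunit _
  -- `∇v = w·(w∇v - v∇w)` and `∇w = -v·(w∇v - v∇w)` because `v∇v + w∇w = 0` and `v² + w² = 1`
  have hsum_v : ∑ i, pdR d ρ i x * pdR d v i x
      = w x * ∑ i, pdR d ρ i x * (w x * pdR d v i x - v x * pdR d w i x) := by
    rw [Finset.mul_sum]
    exact Finset.sum_congr rfl fun i _ => by
      linear_combination (-(pdR d ρ i x * pdR d v i x)) * hunit_x + (pdR d ρ i x * v x) * hgrad i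
  have hsum_w : ∑ i, pdR d ρ i x * pdR d w i x
      = -v x * ∑ i, pdR d ρ i x * (w x * pdR d v i x - v x * pdR d w i x) := by
    rw [Finset.mul_sum]
    exact Finset.sum_congr rfl fun i _ => by
      linear_combination (-(pdR d ρ i x * pdR d w i x)) * hunit_x + (pdR d ρ i x * w x) * hgrad i
  have hsplit : (fun y => (ρ y : ℂ) * (v y + Complex.I * w y)) =ᶠ[𝓝 x]
      fun y => ((ρ y * v y : ℝ) : ℂ) + Complex.I * ((ρ y * w y : ℝ) : ℂ) :=
    .of_forall fun y => by push_cast; ring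
  rw [hsplit.lapC_eq, lapC_ofReal_add_I_mul (hρ.mul hv) (hρ.mul hw),
    lapR_mul hρ hv, lapR_mul hρ hw, hsum_v, hsum_w]
  push_cast
  ring

lemma norm_ofReal_mul_ofReal_add_I_mul {ρ v w : ℝ} (hunit : v ^ 2 + w ^ 2 = 1) :
    ‖(ρ : ℂ) * (v + Complex.I * w)‖ = |ρ| := by
  rw [norm_mul, Complex.norm_real, Real.norm_eq_abs, mul_comm Complex.I, Complex.norm_add_mul_I,
    hunit, Real.sqrt_one, mul_one]

lemma polar_rates_of_eq {ρ v w ρ' v' w' κ β Lρ Lv Lw S : ℝ} (hρ : ρ ≠ 0)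
    (hunit : v ^ 2 + w ^ 2 = 1) (hunit' : v * v' + w * w' = 0)
    (h : Complex.I * ((ρ' : ℂ) * (v + Complex.I * w) + ρ * (v' + Complex.I * w'))
      + κ * (((Lρ * v + 2 * w * S + ρ * Lv : ℝ) : ℂ)
        + Complex.I * ((Lρ * w - 2 * v * S + ρ * Lw : ℝ) : ℂ))
      + β * (ρ : ℂ) ^ 2 * (ρ * (v + Complex.I * w)) = 0) :
    ρ' = κ * (ρ * (w * Lv - v * Lw) + 2 * S) ∧
      v' = κ * (-w * (Lρ / ρ + (w * Lw + v * Lv))) - β * ρ ^ 2 * w ∧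
      w' = κ * (v * (Lρ / ρ + (w * Lw + v * Lv))) + β * ρ ^ 2 * v := by
  have hre := congrArg Complex.re h
  have him := congrArg Complex.im h
  simp only [Complex.add_re, Complex.add_im, Complex.mul_re, Complex.mul_im, Complex.I_re,
    Complex.I_im, Complex.ofReal_re, Complex.ofReal_im, Complex.zero_re, Complex.zero_im,
    sq] at hre him
  have hρ' : ρ' = κ * (ρ * (w * Lv - v * Lw) + 2 * S) := by
    linear_combination (-w) * hre + v * him + (-ρ' + 2 * κ * S) * hunit - ρ * hunit'
  have hphase : v * w' - w * v' = κ * (Lρ / ρ + (w * Lw + v * Lv)) + β * ρ ^ 2 := by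
    field_simp
    linear_combination (-v) * hre + (-w) * him + (κ * Lρ + β * ρ ^ 3) * hunit
  have hv' : v' = -w * (v * w' - w * v') := by linear_combination v * hunit' - v' * hunit
  have hw' : w' = v * (v * w' - w * v') := by linear_combination w * hunit' - w' * hunit
  refine ⟨hρ', ?_, ?_⟩
  · rw [hv', hphase]; ring
  · rw [hw', hphase]; ring

lemma ContDiffOn.contDiffAt_slices_of_mem_Ioo_prod {E : Type*} [NormedAddCommGroup E]
    [NormedSpace ℝ E] {n : WithTop ℕ∞} {F : ℝ → E → ℝ} {a b z : ℝ} {Ω : Set E} {x : E}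
    (hF : ContDiffOn ℝ n (fun p : ℝ × E => F p.1 p.2) (Ico a b ×ˢ Ω)) (hn : n ≠ 0)
    (hΩ : IsOpen Ω) (hz : z ∈ Ioo a b) (hx : x ∈ Ω) :
    ContDiffAt ℝ n (F z) x ∧ DifferentiableAt ℝ (fun t => F t x) z := by
  have hFzx : ContDiffAt ℝ n (fun p : ℝ × E => F p.1 p.2) (z, x) :=
    hF.contDiffAt (mem_of_superset ((isOpen_Ioo.prod hΩ).mem_nhds ⟨hz, hx⟩)
      (prod_mono Ioo_subset_Ico_self subset_rfl))
  exact ⟨hFzx.comp x (contDiffAt_const.prodMk contDiffAt_id),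
    (hFzx.differentiableAt hn).comp (f := fun t => (t, x)) z
      (differentiableAt_id.prodMk (differentiableAt_const x))⟩

theorem GP_polar_evolution_general
    (d : ℕ) (Ω : Set (EuclideanSpace ℝ (Fin d))) (hΩ : IsOpen Ω)
    (κ β : EuclideanSpace ℝ (Fin d) → ℝ) (ε : ℝ)
    (u : ℝ → EuclideanSpace ℝ (Fin d) → ℂ) (ρ v w : ℝ → EuclideanSpace ℝ (Fin d) → ℝ)
    (hρC2 : ContDiffOn ℝ 2 (fun p : ℝ × EuclideanSpace ℝ (Fin d) => ρ p.1 p.2) (Ico 0 ε ×ˢ Ω))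
    (hvC2 : ContDiffOn ℝ 2 (fun p : ℝ × EuclideanSpace ℝ (Fin d) => v p.1 p.2) (Ico 0 ε ×ˢ Ω))
    (hwC2 : ContDiffOn ℝ 2 (fun p : ℝ × EuclideanSpace ℝ (Fin d) => w p.1 p.2) (Ico 0 ε ×ˢ Ω))
    (hpde : ∀ z ∈ Ioo (0 : ℝ) ε, ∀ x ∈ Ω,
      Complex.I * deriv (fun t => u t x) z + (κ x : ℂ) * lapC d (u z) x
        + (β x : ℂ) * ((‖u z x‖ : ℂ)) ^ 2 * u z x = 0)
    (hρpos : ∀ z ∈ Ico (0 : ℝ) ε, ∀ x ∈ Ω, 0 < ρ z x)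
    (hvw : ∀ z ∈ Ico (0 : ℝ) ε, ∀ x ∈ Ω, (v z x) ^ 2 + (w z x) ^ 2 = 1)
    (hdecomp : ∀ z ∈ Ico (0 : ℝ) ε, ∀ x ∈ Ω,
      u z x = (ρ z x : ℂ) * ((v z x : ℂ) + Complex.I * (w z x : ℂ))) :
    ∀ z ∈ Ioo (0 : ℝ) ε, ∀ x ∈ Ω,
      deriv (fun t => ρ t x) z = κ x * Afun d (ρ z) (v z) (w z) x ∧
      deriv (fun t => v t x) z = κ x * Bfun d (ρ z) (v z) (w z) x - β x * (ρ z x) ^ 2 * w z x ∧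
      deriv (fun t => w t x) z = κ x * Cfun d (ρ z) (v z) (w z) x + β x * (ρ z x) ^ 2 * v z x := by
  intro z hz x hx
  have hzIco : z ∈ Ico 0 ε := Ioo_subset_Ico_self hz
  obtain ⟨hρx, hρt⟩ := hρC2.contDiffAt_slices_of_mem_Ioo_prod two_ne_zero hΩ hz hx
  obtain ⟨hvx, hvt⟩ := hvC2.contDiffAt_slices_of_mem_Ioo_prod two_ne_zero hΩ hz hx
  obtain ⟨hwx, hwt⟩ := hwC2.contDiffAt_slices_of_mem_Ioo_prod two_ne_zero hΩ hz hx
  have hnear_z : ∀ᶠ t in 𝓝 z, t ∈ Ico 0 ε :=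
    eventually_of_mem (isOpen_Ioo.mem_nhds hz) fun _ ht => Ioo_subset_Ico_self ht
  have hunit_x : ∀ᶠ y in 𝓝 x, v z y ^ 2 + w z y ^ 2 = 1 :=
    eventually_of_mem (hΩ.mem_nhds hx) (hvw z hzIco)
  have hunit_z : ∀ᶠ t in 𝓝 z, v t x ^ 2 + w t x ^ 2 = 1 :=
    hnear_z.mono fun t ht => hvw t ht x hx
  have hut : HasDerivAt (fun t => u t x) (deriv (fun t => ρ t x) z * (v z x + Complex.I * w z x)
      + ρ z x * (deriv (fun t => v t x) z + Complex.I * deriv (fun t => w t x) z)) z :=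
    (hρt.hasDerivAt.ofReal_comp.mul (hvt.hasDerivAt.ofReal_comp.add
      (hwt.hasDerivAt.ofReal_comp.const_mul Complex.I))).congr_of_eventuallyEq
        (hnear_z.mono fun t ht => hdecomp t ht x hx)
  have hlap : lapC d (u z) x = lapC d (fun y => (ρ z y : ℂ) * (v z y + Complex.I * w z y)) x :=
    Filter.EventuallyEq.lapC_eq (eventually_of_mem (hΩ.mem_nhds hx) (hdecomp z hzIco))
  have h := hpde z hz x hx
  rw [hut.deriv, hlap, lapC_ofReal_mul_ofReal_add_I_mul hρx hvx hwx hunit_x, hdecomp z hzIco x hx,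
    norm_ofReal_mul_ofReal_add_I_mul hunit_x.self_of_nhds, abs_of_pos (hρpos z hzIco x hx)] at h
  exact polar_rates_of_eq (hρpos z hzIco x hx).ne' hunit_x.self_of_nhds
    (mul_fderiv_add_mul_fderiv_eq_zero hvt hwt hunit_z 1) h

theorem GP_polar_evolution
    (d : ℕ) (Ω : Set (EuclideanSpace ℝ (Fin d))) (hΩ : IsOpen Ω)
    (κ β : EuclideanSpace ℝ (Fin d) → ℝ) (ε : ℝ) (hε : 0 < ε)
    (u : ℝ → EuclideanSpace ℝ (Fin d) → ℂ) (ρ v w : ℝ → EuclideanSpace ℝ (Fin d) → ℝ)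
    (hu : ContDiffOn ℝ 2 (fun p : ℝ × EuclideanSpace ℝ (Fin d) => u p.1 p.2) (Ico 0 ε ×ˢ Ω))
    (hρC2 : ContDiffOn ℝ 2 (fun p : ℝ × EuclideanSpace ℝ (Fin d) => ρ p.1 p.2) (Ico 0 ε ×ˢ Ω))
    (hvC2 : ContDiffOn ℝ 2 (fun p : ℝ × EuclideanSpace ℝ (Fin d) => v p.1 p.2) (Ico 0 ε ×ˢ Ω))
    (hwC2 : ContDiffOn ℝ 2 (fun p : ℝ × EuclideanSpace ℝ (Fin d) => w p.1 p.2) (Ico 0 ε ×ˢ Ω))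
    (hpde : ∀ z ∈ Ioo (0 : ℝ) ε, ∀ x ∈ Ω,
      Complex.I * deriv (fun t => u t x) z + (κ x : ℂ) * lapC d (u z) x
        + (β x : ℂ) * ((‖u z x‖ : ℂ)) ^ 2 * u z x = 0)
    (hρpos : ∀ z ∈ Ico (0 : ℝ) ε, ∀ x ∈ Ω, 0 < ρ z x)
    (hvw : ∀ z ∈ Ico (0 : ℝ) ε, ∀ x ∈ Ω, (v z x) ^ 2 + (w z x) ^ 2 = 1)
    (hdecomp : ∀ z ∈ Ico (0 : ℝ) ε, ∀ x ∈ Ω,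
      u z x = (ρ z x : ℂ) * ((v z x : ℂ) + Complex.I * (w z x : ℂ))) :
    ∀ z ∈ Ioo (0 : ℝ) ε, ∀ x ∈ Ω,
      deriv (fun t => ρ t x) z = κ x * Afun d (ρ z) (v z) (w z) x ∧
      deriv (fun t => v t x) z = κ x * Bfun d (ρ z) (v z) (w z) x - β x * (ρ z x) ^ 2 * w z x ∧
      deriv (fun t => w t x) z = κ x * Cfun d (ρ z) (v z) (w z) x + β x * (ρ z x) ^ 2 * v z x :=
  GP_polar_evolution_general d Ω hΩ κ β ε u ρ v w hρC2 hvC2 hwC2 hpde hρpos hvw hdecomp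
end
end

section
/- Let Ω ⊆ ℝᵈ be an open set and let ψ : Ω → ℝ be a C² function such that cos(ψ(x)) ≠ 0 for all x ∈ Ω and Δψ = −tan(ψ)|∇ψ|² on Ω. Let κ, β : Ω → ℝ with κ nowhere vanishing and β(x)/κ(x) = |∇ψ(x)|²/cos(ψ(x)) for all x ∈ Ω (equivalently, since Δψ = −tan(ψ)|∇ψ|², β/κ = −Δψ/sin(ψ) wherever sin(ψ) ≠ 0). Then the functions u₊(z,x) := e^{iψ(x)} and u₋(z,x) := e^{−iψ(x)}, which do not depend on z, are solutions of the quadratic nonlinear Schrödinger equation i ∂_z u + κ Δu + β u² = 0 on (0,∞) × Ω, and |u₊| = |u₋| = 1 everywhere; if moreover sin(ψ) is not identically zero on Ω, then the initial conditions u₊(0,·) and u₋(0,·) are distinct. -/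
noncomputable section

open Set

/-!
With `s = ±i`, so that `s² = -1` and `e^{sψ} = cos ψ + s sin ψ`, the chain rule gives
`Δ e^{sψ} = e^{sψ} (s Δψ - |∇ψ|²)`. Inserting `Δψ = -tan ψ |∇ψ|²` and `β = κ |∇ψ|² / cos ψ`,
the terms `κ Δ e^{sψ}` and `β e^{2sψ}` cancel exactly, and `∂_z e^{sψ} = 0`.
-/

lemma hasFDerivAt_cexp_mul_ofReal {E : Type*} [NormedAddCommGroup E] [NormedSpace ℝ E]
    {ψ : E → ℝ} {x : E} (s : ℂ) (hψ : DifferentiableAt ℝ ψ x) :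
    HasFDerivAt (fun y => Complex.exp (s * ψ y))
      (Complex.exp (s * ψ x) • s • Complex.ofRealCLM.comp (fderiv ℝ ψ x)) x :=
  ((Complex.ofRealCLM.hasFDerivAt.comp x hψ.hasFDerivAt).const_mul s).cexp

section Derivatives

variable {d : ℕ} {ψ : EuclideanSpace ℝ (Fin d) → ℝ} {x : EuclideanSpace ℝ (Fin d)}

lemma pdC_cexp_mul_ofReal (s : ℂ) (hψ : DifferentiableAt ℝ ψ x) (i : Fin d) :
    pdC d (fun y => Complex.exp (s * ψ y)) i x = Complex.exp (s * ψ x) * (s * pdR d ψ i x) := by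
  simp [pdC, pdR, (hasFDerivAt_cexp_mul_ofReal s hψ).fderiv]

lemma pdC_pdC_cexp_mul_ofReal (s : ℂ) (hψ : ContDiffAt ℝ 2 ψ x) (i : Fin d) :
    pdC d (pdC d (fun y => Complex.exp (s * ψ y)) i) i x
      = Complex.exp (s * ψ x) * (s * pdR d (pdR d ψ i) i x + s ^ 2 * (pdR d ψ i x) ^ 2) := by
  have hpd : DifferentiableAt ℝ (pdR d ψ i) x :=
    ((hψ.fderiv_right (m := 1) le_rfl).differentiableAt one_ne_zero).clm_apply
      (differentiableAt_const _)
  have hpdC : pdC d (fun y => Complex.exp (s * ψ y)) i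
      =ᶠ[nhds x] fun y => Complex.exp (s * ψ y) * (s * pdR d ψ i y) := by
    filter_upwards [hψ.eventually (by simp)] with y hy
    exact pdC_cexp_mul_ofReal s (hy.differentiableAt two_ne_zero) i
  have hprod : HasFDerivAt (fun y => Complex.exp (s * ψ y) * (s * pdR d ψ i y)) _ x :=
    (hasFDerivAt_cexp_mul_ofReal s (hψ.differentiableAt two_ne_zero)).mul
      ((Complex.ofRealCLM.hasFDerivAt.comp x hpd.hasFDerivAt).const_mul s)
  rw [pdC, hpdC.fderiv_eq, hprod.fderiv]
  simp only [pdR, add_apply, smul_apply,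
    ContinuousLinearMap.comp_apply, Complex.ofRealCLM_apply, smul_eq_mul]
  ring

lemma lapC_cexp_mul_ofReal (s : ℂ) (hψ : ContDiffAt ℝ 2 ψ x) :
    lapC d (fun y => Complex.exp (s * ψ y)) x
      = Complex.exp (s * ψ x) * (s * lapR d ψ x + s ^ 2 * ((∑ i, (pdR d ψ i x) ^ 2 : ℝ) : ℂ)) := by
  simp only [lapC, lapR, pdC_pdC_cexp_mul_ofReal s hψ, Complex.ofReal_sum, Complex.ofReal_pow,
    Finset.mul_sum, ← Finset.sum_add_distrib]

end Derivatives

lemma cexp_mul_ofReal_of_sq_eq_neg_one {s : ℂ} (hs : s ^ 2 = -1) (t : ℝ) :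
    Complex.exp (s * t) = Real.cos t + s * Real.sin t := by
  rcases sq_eq_sq_iff_eq_or_eq_neg.1 (hs.trans Complex.I_sq.symm) with rfl | rfl
  · rw [mul_comm, Complex.exp_mul_I]
    push_cast
    ring
  · rw [neg_mul, ← mul_neg, mul_comm, ← Complex.ofReal_neg, Complex.exp_mul_I]
    push_cast
    rw [Complex.cos_neg, Complex.sin_neg]
    ring

lemma lapC_cexp_mul_ofReal_add_sq_eq_zero {d : ℕ} {ψ : EuclideanSpace ℝ (Fin d) → ℝ}
    {x : EuclideanSpace ℝ (Fin d)} (hψ : ContDiffAt ℝ 2 ψ x) (hcos : Real.cos (ψ x) ≠ 0)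
    (hlap : lapR d ψ x = -Real.tan (ψ x) * ∑ i, (pdR d ψ i x) ^ 2)
    {k b : ℝ} (hk : k ≠ 0) (hbk : b / k = (∑ i, (pdR d ψ i x) ^ 2) / Real.cos (ψ x))
    {s : ℂ} (hs : s ^ 2 = -1) :
    (k : ℂ) * lapC d (fun y => Complex.exp (s * ψ y)) x
      + (b : ℂ) * Complex.exp (s * ψ x) ^ 2 = 0 := by
  set G := ∑ i, (pdR d ψ i x) ^ 2
  have hb : b = k * G / Real.cos (ψ x) := by
    rw [div_eq_div_iff hk hcos] at hbk
    field_simp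
    linarith
  rw [lapC_cexp_mul_ofReal s hψ, cexp_mul_ofReal_of_sq_eq_neg_one hs, hlap, hb,
    Real.tan_eq_sin_div_cos]
  have hcos' : (Real.cos (ψ x) : ℂ) ≠ 0 := by exact_mod_cast hcos
  simp only [Complex.ofReal_mul, Complex.ofReal_div, Complex.ofReal_neg]
  field_simp
  linear_combination (k * G * (Real.cos (ψ x) + s * Real.sin (ψ x)) * Real.cos (ψ x)) * hs

lemma qnls_of_forall_eq {d : ℕ} {u : ℝ → EuclideanSpace ℝ (Fin d) → ℂ}
    {f : EuclideanSpace ℝ (Fin d) → ℂ} (hu : ∀ z x, u z x = f x) {k b : ℝ}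
    {x : EuclideanSpace ℝ (Fin d)} (hf : (k : ℂ) * lapC d f x + (b : ℂ) * f x ^ 2 = 0) (z : ℝ) :
    Complex.I * deriv (fun t => u t x) z + (k : ℂ) * lapC d (u z) x + (b : ℂ) * u z x ^ 2 = 0 := by
  have hconst : (fun t => u t x) = fun _ => f x := funext fun t => hu t x
  rw [hconst, deriv_const, funext (hu z), mul_zero, zero_add, hf]

theorem QNLS_nonuniqueness_general
    (d : ℕ) (Ω : Set (EuclideanSpace ℝ (Fin d))) (hΩ : IsOpen Ω)
    (ψ : EuclideanSpace ℝ (Fin d) → ℝ) (hψ : ContDiffOn ℝ 2 ψ Ω)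
    (hcos : ∀ x ∈ Ω, Real.cos (ψ x) ≠ 0)
    (heik : ∀ x ∈ Ω, lapR d ψ x = -Real.tan (ψ x) * (∑ i, (pdR d ψ i x) ^ 2))
    (κ β : EuclideanSpace ℝ (Fin d) → ℝ) (hκ : ∀ x ∈ Ω, κ x ≠ 0)
    (hβκ : ∀ x ∈ Ω, β x / κ x = (∑ i, (pdR d ψ i x) ^ 2) / Real.cos (ψ x))
    (uplus uminus : ℝ → EuclideanSpace ℝ (Fin d) → ℂ)
    (huplus : ∀ z : ℝ, ∀ x : EuclideanSpace ℝ (Fin d), uplus z x = Complex.exp (Complex.I * (ψ x : ℂ)))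
    (huminus : ∀ z : ℝ, ∀ x : EuclideanSpace ℝ (Fin d), uminus z x = Complex.exp (-(Complex.I * (ψ x : ℂ)))) :
    (∀ z ∈ Ioi (0 : ℝ), ∀ x ∈ Ω,
      Complex.I * deriv (fun t => uplus t x) z + (κ x : ℂ) * lapC d (uplus z) x
        + (β x : ℂ) * (uplus z x) ^ 2 = 0) ∧
    (∀ z ∈ Ioi (0 : ℝ), ∀ x ∈ Ω,
      Complex.I * deriv (fun t => uminus t x) z + (κ x : ℂ) * lapC d (uminus z) x
        + (β x : ℂ) * (uminus z x) ^ 2 = 0) ∧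
    (∀ z : ℝ, ∀ x : EuclideanSpace ℝ (Fin d), ‖uplus z x‖ = 1 ∧ ‖uminus z x‖ = 1) ∧
    ((∃ x ∈ Ω, Real.sin (ψ x) ≠ 0) → ∃ x ∈ Ω, uplus 0 x ≠ uminus 0 x) := by
  have hsol : ∀ {s : ℂ}, s ^ 2 = -1 → ∀ x ∈ Ω,
      (κ x : ℂ) * lapC d (fun y => Complex.exp (s * ψ y)) x
        + (β x : ℂ) * Complex.exp (s * ψ x) ^ 2 = 0 := fun hs x hx =>
    lapC_cexp_mul_ofReal_add_sq_eq_zero (hψ.contDiffAt (hΩ.mem_nhds hx)) (hcos x hx) (heik x hx)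
      (hκ x hx) (hβκ x hx) hs
  have hI : Complex.I ^ 2 = -1 := Complex.I_sq
  have hnegI : (-Complex.I) ^ 2 = -1 := by rw [neg_sq, Complex.I_sq]
  have huminus' : ∀ z x, uminus z x = Complex.exp (-Complex.I * ψ x) := by
    simpa only [neg_mul] using huminus
  refine ⟨fun z _ x hx => qnls_of_forall_eq huplus (hsol hI x hx) z,
    fun z _ x hx => qnls_of_forall_eq huminus' (hsol hnegI x hx) z,
    fun z x => by simp [huplus, huminus, Complex.norm_exp], ?_⟩
  rintro ⟨x, hx, hsin⟩
  refine ⟨x, hx, fun heq => hsin ?_⟩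
  rw [huplus, huminus', cexp_mul_ofReal_of_sq_eq_neg_one hI,
    cexp_mul_ofReal_of_sq_eq_neg_one hnegI] at heq
  have h2Isin : 2 * Complex.I * Real.sin (ψ x) = 0 := by linear_combination heq
  exact_mod_cast (mul_eq_zero.1 h2Isin).resolve_left (by simp)
end
end

section
/- Let β : [0,∞) → ℝ be continuous and let k₁, k₂ ∈ ℝ² be two distinct vectors. For j = 1,2 define u_j(z,x) := exp(i[k_j · x − |k_j|² z + ∫₀^z β(s) ds]) for (z,x) ∈ [0,∞) × ℝ². Then each u_j solves the Gross–Pitaevskii equation i ∂_z u + Δu + β(z)|u|²u = 0 on (0,∞) × ℝ²; |u₁(z,x)| = |u₂(z,x)| = 1 for all (z,x); and there is no constant φ ∈ ℝ such that u₁(0,x) = u₂(0,x) e^{iφ} for all x ∈ ℝ², i.e., the initial conditions e^{ik₁·x} and e^{ik₂·x} belong to different equivalence classes under constant phase shifts. -/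
/-!
Each `u_j` is a plane wave `y ↦ exp(i(k·y + θ(z)))` with `θ(z) = -|k|²z + ∫₀^z β`: the Laplacian
multiplies it by `-|k|²`, `∂_z` by `iθ'(z) = i(β(z) - |k|²)`, and `|u| = 1`, so the three terms of
the equation cancel. If `e^{ik₁·x} = e^{ik₂·x} e^{iφ}` for all `x`, then `x = 0` forces
`e^{iφ} = 1`, so `e^{i(k₁-k₂)·x} ≡ 1`, which fails at `x = π(k₁-k₂)/|k₁-k₂|²`.
-/

noncomputable section

open Set

open scoped RealInnerProductSpace

section PlaneWave

variable {d : ℕ}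

def planeWave (k : EuclideanSpace ℝ (Fin d)) (c : ℝ) (y : EuclideanSpace ℝ (Fin d)) : ℂ :=
  Complex.exp (Complex.I * ((⟪k, y⟫ + c : ℝ) : ℂ))

theorem norm_planeWave (k : EuclideanSpace ℝ (Fin d)) (c : ℝ) (y : EuclideanSpace ℝ (Fin d)) :
    ‖planeWave k c y‖ = 1 :=
  Complex.norm_exp_I_mul_ofReal _

theorem hasFDerivAt_planeWave (k : EuclideanSpace ℝ (Fin d)) (c : ℝ)
    (x : EuclideanSpace ℝ (Fin d)) :
    HasFDerivAt (planeWave k c)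
      ((Complex.I * planeWave k c x) • (Complex.ofRealCLM.comp (innerSL ℝ k))) x := by
  have hphase : HasFDerivAt (fun y => Complex.I * ((⟪k, y⟫ + c : ℝ) : ℂ))
      (Complex.I • Complex.ofRealCLM.comp (innerSL ℝ k)) x :=
    ((Complex.ofRealCLM.hasFDerivAt.comp x ((innerSL ℝ k).hasFDerivAt.add_const c)).const_mul
      Complex.I)
  rw [mul_comm, ← smul_smul]
  exact hphase.cexp

theorem pdC_planeWave (k : EuclideanSpace ℝ (Fin d)) (c : ℝ) (i : Fin d) :
    pdC d (planeWave k c) i = fun x => Complex.I * k i * planeWave k c x := by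
  ext x
  simp only [pdC, (hasFDerivAt_planeWave k c x).fderiv, smul_apply, ContinuousLinearMap.comp_apply,
    coe_innerSL_apply, EuclideanSpace.inner_single_right, Real.ringHom_apply, one_mul,
    Complex.ofRealCLM_apply, smul_eq_mul]
  ring

theorem lapC_planeWave (k : EuclideanSpace ℝ (Fin d)) (c : ℝ) (x : EuclideanSpace ℝ (Fin d)) :
    lapC d (planeWave k c) x = -(‖k‖ ^ 2 : ℝ) * planeWave k c x := by
  have hsecond (i : Fin d) :
      pdC d (pdC d (planeWave k c) i) i x = -(k i : ℂ) ^ 2 * planeWave k c x := by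
    rw [pdC_planeWave, pdC, fderiv_const_mul (hasFDerivAt_planeWave k c x).differentiableAt,
      smul_apply, ← pdC, pdC_planeWave, smul_eq_mul]
    linear_combination (k i : ℂ) ^ 2 * planeWave k c x * Complex.I_mul_I
  simp only [lapC, hsecond, ← Finset.sum_mul, EuclideanSpace.norm_sq_eq, Real.norm_eq_abs, sq_abs]
  push_cast
  rw [Finset.sum_neg_distrib]

theorem HasDerivAt.planeWave {k : EuclideanSpace ℝ (Fin d)} {θ : ℝ → ℝ} {θ' z : ℝ}
    (hθ : HasDerivAt θ θ' z) (x : EuclideanSpace ℝ (Fin d)) :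
    HasDerivAt (fun t => planeWave k (θ t) x) (planeWave k (θ z) x * (Complex.I * θ')) z :=
  (((hθ.const_add ⟪k, x⟫).ofReal_comp).const_mul Complex.I).cexp

end PlaneWave

theorem ContinuousOn.hasDerivAt_intervalIntegral_Ici {β : ℝ → ℝ} {a z : ℝ}
    (hβ : ContinuousOn β (Ici a)) (hz : a < z) :
    HasDerivAt (fun t => ∫ s in a..t, β s) (β z) z :=
  intervalIntegral.integral_hasDerivAt_right
    ((hβ.mono (by rw [uIcc_of_le hz.le]; exact Icc_subset_Ici_self)).intervalIntegrable)
    ((hβ.mono Ioi_subset_Ici_self).stronglyMeasurableAtFilter isOpen_Ioi z hz)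
    (hβ.continuousAt (Ici_mem_nhds hz))

theorem eq_zero_of_forall_cexp_I_mul_inner_eq_one {E : Type*} [NormedAddCommGroup E]
    [InnerProductSpace ℝ E] {k : E} (h : ∀ x : E, Complex.exp (Complex.I * (⟪k, x⟫ : ℂ)) = 1) :
    k = 0 := by
  by_contra hk
  have hk2 : ‖k‖ ^ 2 ≠ 0 := by positivity
  have hπ : ⟪k, (Real.pi / ‖k‖ ^ 2) • k⟫ = Real.pi := by
    rw [real_inner_smul_right, real_inner_self_eq_norm_sq]
    field_simp
  have := h ((Real.pi / ‖k‖ ^ 2) • k)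
  rw [hπ, mul_comm, Complex.exp_pi_mul_I] at this
  norm_num at this

theorem not_exists_phase_cexp_I_mul_inner {E : Type*} [NormedAddCommGroup E]
    [InnerProductSpace ℝ E] {k₁ k₂ : E} (hk : k₁ ≠ k₂) :
    ¬ ∃ φ : ℝ, ∀ x : E, Complex.exp (Complex.I * (⟪k₁, x⟫ : ℂ))
      = Complex.exp (Complex.I * (⟪k₂, x⟫ : ℂ)) * Complex.exp (Complex.I * (φ : ℂ)) := by
  rintro ⟨φ, hφ⟩
  have hphase : Complex.exp (Complex.I * φ) = 1 := by simpa using (hφ 0).symm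
  refine hk (sub_eq_zero.mp (eq_zero_of_forall_cexp_I_mul_inner_eq_one fun x => ?_))
  rw [inner_sub_left, Complex.ofReal_sub, mul_sub, Complex.exp_sub, hφ x, hphase, mul_one,
    div_self (Complex.exp_ne_zero _)]

section GrossPitaevskii

variable {d : ℕ} {β : ℝ → ℝ} {k : EuclideanSpace ℝ (Fin d)}

def gpPlaneWave (β : ℝ → ℝ) (k : EuclideanSpace ℝ (Fin d)) (z : ℝ) :
    EuclideanSpace ℝ (Fin d) → ℂ :=
  planeWave k (-‖k‖ ^ 2 * z + ∫ s in (0 : ℝ)..z, β s)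

theorem gpPlaneWave_apply (z : ℝ) (x : EuclideanSpace ℝ (Fin d)) :
    gpPlaneWave β k z x = Complex.exp (Complex.I *
      ((⟪k, x⟫ - ‖k‖ ^ 2 * z + ∫ s in (0 : ℝ)..z, β s : ℝ) : ℂ)) := by
  rw [gpPlaneWave, planeWave]
  congr 3
  ring

theorem norm_gpPlaneWave (z : ℝ) (x : EuclideanSpace ℝ (Fin d)) : ‖gpPlaneWave β k z x‖ = 1 :=
  norm_planeWave _ _ _

theorem gpPlaneWave_zero (x : EuclideanSpace ℝ (Fin d)) :
    gpPlaneWave β k 0 x = Complex.exp (Complex.I * (⟪k, x⟫ : ℂ)) := by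
  simp [gpPlaneWave_apply]

theorem gpPlaneWave_grossPitaevskii (hβ : ContinuousOn β (Ici 0)) {z : ℝ} (hz : 0 < z)
    (x : EuclideanSpace ℝ (Fin d)) :
    Complex.I * deriv (fun t => gpPlaneWave β k t x) z + lapC d (gpPlaneWave β k z) x
      + (β z : ℂ) * ((‖gpPlaneWave β k z x‖ : ℂ)) ^ 2 * gpPlaneWave β k z x = 0 := by
  have hθ : HasDerivAt (fun t => -‖k‖ ^ 2 * t + ∫ s in (0 : ℝ)..t, β s) (-‖k‖ ^ 2 + β z) z :=
    (((hasDerivAt_id' z).const_mul (-‖k‖ ^ 2)).add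
      (hβ.hasDerivAt_intervalIntegral_Ici hz)).congr_deriv (by rw [mul_one])
  unfold gpPlaneWave
  rw [(hθ.planeWave x).deriv, lapC_planeWave, norm_planeWave]
  set P := planeWave k (-‖k‖ ^ 2 * z + ∫ s in (0 : ℝ)..z, β s) x
  push_cast
  linear_combination (P * (-(‖k‖ : ℂ) ^ 2 + β z)) * Complex.I_mul_I

end GrossPitaevskii

theorem GP_plane_wave_nonuniqueness
    (β : ℝ → ℝ) (hβ : ContinuousOn β (Ici 0))
    (k₁ k₂ : EuclideanSpace ℝ (Fin 2)) (hk : k₁ ≠ k₂)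
    (u₁ u₂ : ℝ → EuclideanSpace ℝ (Fin 2) → ℂ)
    (hu₁ : ∀ z : ℝ, ∀ x : EuclideanSpace ℝ (Fin 2),
      u₁ z x = Complex.exp (Complex.I *
        ((⟪k₁, x⟫ - ‖k₁‖ ^ 2 * z + ∫ s in (0 : ℝ)..z, β s : ℝ) : ℂ)))
    (hu₂ : ∀ z : ℝ, ∀ x : EuclideanSpace ℝ (Fin 2),
      u₂ z x = Complex.exp (Complex.I *
        ((⟪k₂, x⟫ - ‖k₂‖ ^ 2 * z + ∫ s in (0 : ℝ)..z, β s : ℝ) : ℂ))) :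
    (∀ z ∈ Ioi (0 : ℝ), ∀ x : EuclideanSpace ℝ (Fin 2),
      Complex.I * deriv (fun t => u₁ t x) z + lapC 2 (u₁ z) x
        + (β z : ℂ) * ((‖u₁ z x‖ : ℂ)) ^ 2 * u₁ z x = 0) ∧
    (∀ z ∈ Ioi (0 : ℝ), ∀ x : EuclideanSpace ℝ (Fin 2),
      Complex.I * deriv (fun t => u₂ t x) z + lapC 2 (u₂ z) x
        + (β z : ℂ) * ((‖u₂ z x‖ : ℂ)) ^ 2 * u₂ z x = 0) ∧
    (∀ z : ℝ, ∀ x : EuclideanSpace ℝ (Fin 2), ‖u₁ z x‖ = 1 ∧ ‖u₂ z x‖ = 1) ∧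
    ¬ ∃ φ : ℝ, ∀ x : EuclideanSpace ℝ (Fin 2), u₁ 0 x = u₂ 0 x * Complex.exp (Complex.I * (φ : ℂ)) := by
  obtain rfl : u₁ = gpPlaneWave β k₁ := funext₂ fun z x => by rw [hu₁, gpPlaneWave_apply]
  obtain rfl : u₂ = gpPlaneWave β k₂ := funext₂ fun z x => by rw [hu₂, gpPlaneWave_apply]
  refine ⟨fun z hz => gpPlaneWave_grossPitaevskii hβ hz,
    fun z hz => gpPlaneWave_grossPitaevskii hβ hz,
    fun z x => ⟨norm_gpPlaneWave z x, norm_gpPlaneWave z x⟩, ?_⟩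
  simpa only [gpPlaneWave_zero] using not_exists_phase_cexp_I_mul_inner hk
end
end

section
/- Let ψ : ℝ² → ℝ be a non-constant C² harmonic function (Δψ = 0 on ℝ²), let c ∈ ℝ, and define β : ℝ² → ℝ by β(x) := c + |∇ψ(x)|². Then the functions u₊(z,x) := e^{i(ψ(x) + cz)} and u₋(z,x) := e^{i(−ψ(x) + cz)} are solutions of the Gross–Pitaevskii equation i ∂_z u + Δu + β(x)|u|²u = 0 on (0,∞) × ℝ²; |u₊(z,x)| = |u₋(z,x)| = 1 for all (z,x); and there is no constant φ ∈ ℝ such that u₊(0,x) = u₋(0,x) e^{iφ} for all x ∈ ℝ², i.e., the initial conditions e^{iψ} and e^{−iψ} belong to different equivalence classes under constant phase shifts. -/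
/-!
For a real phase `g` and `u = exp (i (g + c z))` one has `i ∂_z u = -c u`,
`Δu = (i Δg - |∇g|²) u` and `|u| = 1`, so for harmonic `g` the Gross–Pitaevskii residual is
`(β - c - |∇g|²) u = 0`; both `g = ψ` and `g = -ψ` are harmonic with the same `|∇g|²`.
If `exp (i ψ) = exp (-i ψ) exp (i φ)` everywhere, then `ψ - φ / 2` is a continuous function
on the connected plane with values in the discrete group `π ℤ`, hence constant.
-/

noncomputable section

open Set

open Complex Real

variable {d : ℕ}

lemma norm_cexp_I_mul_ofReal (r : ℝ) : ‖cexp (I * r)‖ = 1 := by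
  rw [mul_comm]; exact norm_exp_ofReal_mul_I r

lemma pdR_add_const (f : EuclideanSpace ℝ (Fin d) → ℝ) (a : ℝ) (i : Fin d) :
    pdR d (fun y => f y + a) i = pdR d f i := by
  funext x; simp only [pdR, fderiv_add_const]

lemma pdR_neg (f : EuclideanSpace ℝ (Fin d) → ℝ) (i : Fin d) :
    pdR d (fun y => -f y) i = fun y => -pdR d f i y := by
  funext x; simp only [pdR, fderiv_fun_neg, neg_apply]

lemma lapR_add_const (f : EuclideanSpace ℝ (Fin d) → ℝ) (a : ℝ) :
    lapR d (fun y => f y + a) = lapR d f := by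
  funext x; simp only [lapR, pdR_add_const]

lemma lapR_neg (f : EuclideanSpace ℝ (Fin d) → ℝ) (x : EuclideanSpace ℝ (Fin d)) :
    lapR d (fun y => -f y) x = -lapR d f x := by
  simp only [lapR, pdR_neg, Finset.sum_neg_distrib]

lemma HasFDerivAt.cexp_I_mul_ofReal {F : Type*} [NormedAddCommGroup F] [NormedSpace ℝ F]
    {g : F → ℝ} {g' : F →L[ℝ] ℝ} {x : F} (hg : HasFDerivAt g g' x) :
    HasFDerivAt (fun y => cexp (I * g y)) (cexp (I * g x) • I • (ofRealCLM.comp g')) x :=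
  ((ofRealCLM.hasFDerivAt.comp x hg).const_mul I).cexp

lemma HasDerivAt.cexp_I_mul_ofReal {g : ℝ → ℝ} {g' t : ℝ} (hg : HasDerivAt g g' t) :
    HasDerivAt (fun s => cexp (I * g s)) (cexp (I * g t) * (I * g')) t :=
  (hg.ofReal_comp.const_mul I).cexp

lemma pdC_cexp_I_mul {g : EuclideanSpace ℝ (Fin d) → ℝ} {x : EuclideanSpace ℝ (Fin d)}
    (hg : DifferentiableAt ℝ g x) (i : Fin d) :
    pdC d (fun y => cexp (I * g y)) i x = I * pdR d g i x * cexp (I * g x) := by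
  rw [pdC, hg.hasFDerivAt.cexp_I_mul_ofReal.fderiv, pdR]
  simp only [smul_apply, ContinuousLinearMap.comp_apply, ofRealCLM_apply,
    smul_eq_mul]
  ring

lemma pdC_pdC_cexp_I_mul {g : EuclideanSpace ℝ (Fin d) → ℝ} (hg : ContDiff ℝ 2 g)
    (i : Fin d) (x : EuclideanSpace ℝ (Fin d)) :
    pdC d (pdC d (fun y => cexp (I * g y)) i) i x
      = (I * pdR d (pdR d g i) i x - pdR d g i x ^ 2) * cexp (I * g x) := by
  have hg₁ : Differentiable ℝ g := hg.differentiable (by norm_num)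
  have hpdR : Differentiable ℝ (pdR d g i) :=
    ((hg.fderiv_right (m := 1) (by norm_num)).clm_apply contDiff_const).differentiable (by norm_num)
  have hpdC : pdC d (fun y => cexp (I * g y)) i = fun y => I * pdR d g i y * cexp (I * g y) :=
    funext fun y => pdC_cexp_I_mul (hg₁ y) i
  have hpdR' : HasFDerivAt (fun y => (pdR d g i y : ℂ))
      (ofRealCLM.comp (fderiv ℝ (pdR d g i) x)) x :=
    ofRealCLM.hasFDerivAt.comp x (hpdR x).hasFDerivAt
  have hprod := (hpdR'.const_mul I).fun_mul (hg₁ x).hasFDerivAt.cexp_I_mul_ofReal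
  rw [hpdC, pdC, hprod.fderiv]
  simp only [add_apply, smul_apply,
    ContinuousLinearMap.comp_apply, ofRealCLM_apply, smul_eq_mul]
  rw [← pdR, ← pdR]
  linear_combination (pdR d g i x : ℂ) ^ 2 * cexp (I * g x) * I_sq

lemma lapC_cexp_I_mul {g : EuclideanSpace ℝ (Fin d) → ℝ} (hg : ContDiff ℝ 2 g)
    (x : EuclideanSpace ℝ (Fin d)) :
    lapC d (fun y => cexp (I * g y)) x
      = (I * lapR d g x - (∑ i, pdR d g i x ^ 2 : ℝ)) * cexp (I * g x) := by
  simp only [lapC, lapR, pdC_pdC_cexp_I_mul hg, ← Finset.sum_mul]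
  push_cast
  rw [Finset.mul_sum, Finset.sum_sub_distrib]

lemma deriv_cexp_I_mul_affine (a c z : ℝ) :
    deriv (fun t : ℝ => cexp (I * ((a + c * t : ℝ) : ℂ))) z
      = I * c * cexp (I * ((a + c * z : ℝ) : ℂ)) := by
  have h := (((hasDerivAt_id' z).const_mul c).const_add a).cexp_I_mul_ofReal
  rw [h.deriv]
  simp only [mul_one]
  ring

theorem gp_residual_cexp_harmonic_phase {ψ : EuclideanSpace ℝ (Fin d) → ℝ}
    (hψ : ContDiff ℝ 2 ψ) (hharm : ∀ x, lapR d ψ x = 0) (c z : ℝ)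
    (x : EuclideanSpace ℝ (Fin d)) :
    I * deriv (fun t => cexp (I * ((ψ x + c * t : ℝ) : ℂ))) z
      + lapC d (fun y => cexp (I * ((ψ y + c * z : ℝ) : ℂ))) x
      + ((c + ∑ i, pdR d ψ i x ^ 2 : ℝ) : ℂ) * (‖cexp (I * ((ψ x + c * z : ℝ) : ℂ))‖ : ℂ) ^ 2
        * cexp (I * ((ψ x + c * z : ℝ) : ℂ)) = 0 := by
  have hlap := lapC_cexp_I_mul (hψ.add (contDiff_const (c := c * z))) x
  simp only [lapR_add_const, pdR_add_const, hharm, ofReal_zero, mul_zero, zero_sub] at hlap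
  rw [deriv_cexp_I_mul_affine, hlap, norm_cexp_I_mul_ofReal]
  push_cast
  linear_combination c * cexp (I * (ψ x + c * z)) * I_sq

lemma PreconnectedSpace.eq_of_forall_mem_zmultiples {X : Type*} [TopologicalSpace X]
    [PreconnectedSpace X] {f : X → ℝ} (hf : Continuous f) {a : ℝ}
    (hfa : ∀ x, f x ∈ AddSubgroup.zmultiples a) (x y : X) : f x = f y :=
  congrArg Subtype.val <|
    PreconnectedSpace.constant ‹_› (f := fun x => (⟨f x, hfa x⟩ : AddSubgroup.zmultiples a))
      (hf.subtype_mk _)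

lemma sub_half_mem_zmultiples_pi_of_cexp_eq {θ φ : ℝ}
    (h : cexp (I * θ) = cexp (I * (-θ : ℝ)) * cexp (I * φ)) :
    θ - φ / 2 ∈ AddSubgroup.zmultiples π := by
  rw [← Complex.exp_add, exp_eq_exp_iff_exists_int] at h
  obtain ⟨n, hn⟩ := h
  have him := congrArg Complex.im hn
  simp at him
  refine AddSubgroup.mem_zmultiples_iff.mpr ⟨n, ?_⟩
  simp only [zsmul_eq_mul]
  linarith

theorem GP_harmonic_phase_nonuniqueness
    (ψ : EuclideanSpace ℝ (Fin 2) → ℝ) (hψ : ContDiff ℝ 2 ψ)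
    (hharm : ∀ x : EuclideanSpace ℝ (Fin 2), lapR 2 ψ x = 0)
    (hnc : ¬ ∃ c : ℝ, ∀ x : EuclideanSpace ℝ (Fin 2), ψ x = c)
    (c : ℝ) (β : EuclideanSpace ℝ (Fin 2) → ℝ)
    (hβ : ∀ x : EuclideanSpace ℝ (Fin 2), β x = c + ∑ i, (pdR 2 ψ i x) ^ 2)
    (uplus uminus : ℝ → EuclideanSpace ℝ (Fin 2) → ℂ)
    (huplus : ∀ z : ℝ, ∀ x : EuclideanSpace ℝ (Fin 2),
      uplus z x = Complex.exp (Complex.I * ((ψ x + c * z : ℝ) : ℂ)))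
    (huminus : ∀ z : ℝ, ∀ x : EuclideanSpace ℝ (Fin 2),
      uminus z x = Complex.exp (Complex.I * ((-ψ x + c * z : ℝ) : ℂ))) :
    (∀ z ∈ Ioi (0 : ℝ), ∀ x : EuclideanSpace ℝ (Fin 2),
      Complex.I * deriv (fun t => uplus t x) z + lapC 2 (uplus z) x
        + (β x : ℂ) * ((‖uplus z x‖ : ℂ)) ^ 2 * uplus z x = 0) ∧
    (∀ z ∈ Ioi (0 : ℝ), ∀ x : EuclideanSpace ℝ (Fin 2),
      Complex.I * deriv (fun t => uminus t x) z + lapC 2 (uminus z) x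
        + (β x : ℂ) * ((‖uminus z x‖ : ℂ)) ^ 2 * uminus z x = 0) ∧
    (∀ z : ℝ, ∀ x : EuclideanSpace ℝ (Fin 2), ‖uplus z x‖ = 1 ∧ ‖uminus z x‖ = 1) ∧
    ¬ ∃ φ : ℝ, ∀ x : EuclideanSpace ℝ (Fin 2), uplus 0 x = uminus 0 x * Complex.exp (Complex.I * (φ : ℂ)) := by
  obtain rfl : uplus = _ := funext₂ huplus
  obtain rfl : uminus = _ := funext₂ huminus
  obtain rfl : β = _ := funext hβ
  refine ⟨fun z _ x => gp_residual_cexp_harmonic_phase hψ hharm c z x, fun z _ x => ?_,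
    fun z x => ⟨norm_cexp_I_mul_ofReal _, norm_cexp_I_mul_ofReal _⟩, ?_⟩
  · have hharm_neg : ∀ x, lapR 2 (fun y => -ψ y) x = 0 := by simp [lapR_neg, hharm]
    have hgrad_neg : ∑ i, pdR 2 (fun y => -ψ y) i x ^ 2 = ∑ i, pdR 2 ψ i x ^ 2 := by
      simp only [pdR_neg, neg_sq]
    simpa only [hgrad_neg] using gp_residual_cexp_harmonic_phase hψ.neg hharm_neg c z x
  · rintro ⟨φ, hφ⟩
    have hquant : ∀ x, ψ x - φ / 2 ∈ AddSubgroup.zmultiples π := fun x =>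
      sub_half_mem_zmultiples_pi_of_cexp_eq (by simpa only [mul_zero, add_zero] using hφ x)
    refine hnc ⟨ψ 0, fun x => ?_⟩
    have := PreconnectedSpace.eq_of_forall_mem_zmultiples (f := fun x => ψ x - φ / 2)
      (hψ.continuous.sub continuous_const) hquant x 0
    linarith
end
end
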